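/- Let (φ_n) ⊂ W^{1,p}(Ω) satisfy ∫_Ω|∇φ_n|^p - λ∫_{∂Ω} g|φ_n|^p < C for some C > 0 and λ > 0, with g satisfying ∫_{∂Ω} g < 0 and G weakly sequentially continuous. If (‖∇φ_n‖_p) is bounded, then (‖φ_n‖_p) is bounded. -/

import Mathlib

/-!
If `∫ |φ_n|^p` were unbounded, normalizing a subsequence would give unit vectors `w_k` with
`∫ ‖D w_k‖^p → 0` and boundary terms `G w_k` bounded below by a null sequence. By reflexivity a
further subsequence converges weakly to some `v` with `‖v‖ ≤ 1` and `G v ≥ 0`, and by compactness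
`∫ |I w_k - I v|^p → 0`. Minkowski's inequality gives `∫ |I v|^p ≥ 1`, hence `∫ ‖D v‖^p ≤ 0`: so
`v` is a nonzero constant `c`, and `G v = |c|^p ∫ g < 0`, a contradiction.

Nothing is assumed measurable, and the integral of a non-integrable function is `0`; so `∫ f^p`
only certifies `f ∈ Lᵖ` when it is nonzero. The measurability of `I v` and `I w_k - I v` needed for
Minkowski is recovered by polarization from `I w_k` and `I (w_k ± v / 4)`, whose integrals are
nonzero because their gradient parts are too small to account for their norms. Infinitely many
`w_k` with vanishing gradient are constants, and are handled directly.
-/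

open MeasureTheory Filter Set Topology

/-- Weak convergence of a sequence in a normed space. -/
def WeakConv {X : Type*} [NormedAddCommGroup X] [NormedSpace ℝ X] (u : ℕ → X) (v : X) : Prop :=
  ∀ ℓ : X →L[ℝ] ℝ, Tendsto (fun n => ℓ (u n)) atTop (𝓝 (ℓ v))

section Lp

variable {α : Type*} [MeasurableSpace α] {μ : Measure α} {p : ℝ}

theorem memLp_of_integral_rpow_ne_zero (hp : 0 < p) {f : α → ℝ} (hf : 0 ≤ f)
    (h : ∫ x, f x ^ p ∂μ ≠ 0) : MemLp f (ENNReal.ofReal p) μ := by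
  have hint : Integrable (fun x => f x ^ p) μ := by
    by_contra hnot
    exact h (integral_undef hnot)
  have hmeas : AEMeasurable f μ := by
    have : f = fun x => (f x ^ p) ^ p⁻¹ := funext fun x => (Real.rpow_rpow_inv (hf x) hp.ne').symm
    rw [this]
    exact hint.aemeasurable.pow_const _
  have hp' : ENNReal.ofReal p ≠ 0 := by simpa using hp
  refine (memLp_norm_rpow_iff hmeas.aestronglyMeasurable hp' ENNReal.ofReal_ne_top).mp ?_
  rw [ENNReal.div_self hp' ENNReal.ofReal_ne_top, memLp_one_iff_integrable]
  refine hint.congr (Eventually.of_forall fun x => ?_)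
  simp [ENNReal.toReal_ofReal hp.le, abs_of_nonneg (hf x)]

theorem MeasureTheory.MemLp.eLpNorm_eq_ofReal_integral_rpow (hp : 0 < p) {f : α → ℝ}
    (hf0 : 0 ≤ f) (hf : MemLp f (ENNReal.ofReal p) μ) :
    eLpNorm f (ENNReal.ofReal p) μ = ENNReal.ofReal ((∫ x, f x ^ p ∂μ) ^ p⁻¹) := by
  rw [hf.eLpNorm_eq_integral_rpow_norm (by simpa using hp) ENNReal.ofReal_ne_top,
    ENNReal.toReal_ofReal hp.le]
  simp [abs_of_nonneg (hf0 _)]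

theorem integral_rpow_rpow_inv_le_add (hp : 1 ≤ p) {f g h : α → ℝ} (hf0 : 0 ≤ f) (hg0 : 0 ≤ g)
    (hh0 : 0 ≤ h) (hle : h ≤ f + g) (hf : MemLp f (ENNReal.ofReal p) μ)
    (hg : MemLp g (ENNReal.ofReal p) μ) :
    (∫ x, h x ^ p ∂μ) ^ p⁻¹ ≤ (∫ x, f x ^ p ∂μ) ^ p⁻¹ + (∫ x, g x ^ p ∂μ) ^ p⁻¹ := by
  have hp0 : 0 < p := zero_lt_one.trans_le hp
  have hnonneg : ∀ u : α → ℝ, 0 ≤ u → 0 ≤ (∫ x, u x ^ p ∂μ) ^ p⁻¹ := fun u hu =>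
    Real.rpow_nonneg (integral_nonneg fun x => Real.rpow_nonneg (hu x) p) _
  by_cases hzero : ∫ x, h x ^ p ∂μ = 0
  · rw [hzero, Real.zero_rpow (inv_ne_zero hp0.ne')]
    exact add_nonneg (hnonneg f hf0) (hnonneg g hg0)
  have hh := memLp_of_integral_rpow_ne_zero hp0 hh0 hzero
  have hmink : eLpNorm h (ENNReal.ofReal p) μ ≤
      eLpNorm f (ENNReal.ofReal p) μ + eLpNorm g (ENNReal.ofReal p) μ :=
    (eLpNorm_mono_real fun x => by simpa [abs_of_nonneg (hh0 x)] using hle x).trans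
      (eLpNorm_add_le hf.1 hg.1 (by simpa using hp))
  rwa [hh.eLpNorm_eq_ofReal_integral_rpow hp0 hh0, hf.eLpNorm_eq_ofReal_integral_rpow hp0 hf0,
    hg.eLpNorm_eq_ofReal_integral_rpow hp0 hg0,
    ← ENNReal.ofReal_add (hnonneg f hf0) (hnonneg g hg0),
    ENNReal.ofReal_le_ofReal_iff (add_nonneg (hnonneg f hf0) (hnonneg g hg0))] at hmink

/-- Polarization: `f²`, `f g` and `g²` are linear combinations of `|f|²` and `|f ± t g|²`. -/
theorem aemeasurable_abs_mul_add_mul_of_abs {f g : α → ℝ} {t : ℝ} (ht : t ≠ 0)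
    (h₀ : AEMeasurable (fun x => |f x|) μ) (hplus : AEMeasurable (fun x => |f x + t * g x|) μ)
    (hminus : AEMeasurable (fun x => |f x - t * g x|) μ) (a b : ℝ) :
    AEMeasurable (fun x => |a * f x + b * g x|) μ := by
  have hsq : (fun x => |a * f x + b * g x|) = fun x => √(a ^ 2 * |f x| ^ 2
      + a * b / (2 * t) * (|f x + t * g x| ^ 2 - |f x - t * g x| ^ 2)
      + b ^ 2 / (2 * t ^ 2) * (|f x + t * g x| ^ 2 + |f x - t * g x| ^ 2 - 2 * |f x| ^ 2)) := by
    funext x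
    rw [← Real.sqrt_sq_eq_abs]
    congr 1
    simp only [sq_abs]
    field_simp
    ring
  rw [hsq]
  fun_prop

theorem integral_abs_rpow_rpow_inv_le_add_sub {f g : α → ℝ} {t : ℝ} (hp : 1 ≤ p) (ht : t ≠ 0)
    (h₀ : ∫ x, |f x| ^ p ∂μ ≠ 0) (hplus : ∫ x, |f x + t * g x| ^ p ∂μ ≠ 0)
    (hminus : ∫ x, |f x - t * g x| ^ p ∂μ ≠ 0) :
    (∫ x, |f x| ^ p ∂μ) ^ p⁻¹ ≤
      (∫ x, |g x| ^ p ∂μ) ^ p⁻¹ + (∫ x, |f x - g x| ^ p ∂μ) ^ p⁻¹ := by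
  have hp0 : 0 < p := zero_lt_one.trans_le hp
  have hf := memLp_of_integral_rpow_ne_zero hp0 (fun x => abs_nonneg _) h₀
  have hfplus := memLp_of_integral_rpow_ne_zero hp0 (fun x => abs_nonneg _) hplus
  have hfminus := memLp_of_integral_rpow_ne_zero hp0 (fun x => abs_nonneg _) hminus
  have hmeas := aemeasurable_abs_mul_add_mul_of_abs ht hf.1.aemeasurable hfplus.1.aemeasurable
    hfminus.1.aemeasurable
  have hg : MemLp (fun x => |g x|) (ENNReal.ofReal p) μ := by
    refine ((hfplus.add hf).const_mul |t|⁻¹).of_le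
      (by simpa using (hmeas 0 1).aestronglyMeasurable) (Eventually.of_forall fun x => ?_)
    have htg : |t| * |g x| ≤ |f x + t * g x| + |f x| := by
      rw [← abs_mul]
      simpa using abs_sub (f x + t * g x) (f x)
    rw [Pi.add_apply, Real.norm_of_nonneg (abs_nonneg _),
      Real.norm_of_nonneg (by positivity), le_inv_mul_iff₀ (abs_pos.mpr ht)]
    exact htg
  have hfg : MemLp (fun x => |f x - g x|) (ENNReal.ofReal p) μ := by
    refine (hf.add hg).of_le
      (by simpa [sub_eq_add_neg] using (hmeas 1 (-1)).aestronglyMeasurable)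
      (Eventually.of_forall fun x => ?_)
    rw [Pi.add_apply, Real.norm_of_nonneg (abs_nonneg _), Real.norm_of_nonneg (by positivity)]
    exact abs_sub _ _
  exact integral_rpow_rpow_inv_le_add hp (fun x => abs_nonneg _) (fun x => abs_nonneg _)
    (fun x => abs_nonneg _) (fun x => by simpa using abs_add_le (g x) (f x - g x)) hg hfg

theorem integral_norm_add_smul_rpow_rpow_inv_le {E : Type*} [NormedAddCommGroup E]
    [NormedSpace ℝ E] {f g : α → E} (hp : 1 ≤ p) (hf : ∫ x, ‖f x‖ ^ p ∂μ ≠ 0)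
    (hg : ∫ x, ‖g x‖ ^ p ∂μ ≠ 0) (t : ℝ) :
    (∫ x, ‖f x + t • g x‖ ^ p ∂μ) ^ p⁻¹ ≤
      (∫ x, ‖f x‖ ^ p ∂μ) ^ p⁻¹ + |t| * (∫ x, ‖g x‖ ^ p ∂μ) ^ p⁻¹ := by
  have hp0 : 0 < p := zero_lt_one.trans_le hp
  have hscale : (∫ x, (|t| * ‖g x‖) ^ p ∂μ) ^ p⁻¹ = |t| * (∫ x, ‖g x‖ ^ p ∂μ) ^ p⁻¹ := by
    simp_rw [Real.mul_rpow (abs_nonneg t) (norm_nonneg _)]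
    rw [integral_const_mul, Real.mul_rpow (by positivity)
      (integral_nonneg fun x => by positivity), Real.rpow_rpow_inv (abs_nonneg t) hp0.ne']
  rw [← hscale]
  refine integral_rpow_rpow_inv_le_add hp (fun x => norm_nonneg _)
    (fun x => by positivity) (fun x => norm_nonneg _) (fun x => ?_)
    (memLp_of_integral_rpow_ne_zero hp0 (fun x => norm_nonneg _) hf)
    ((memLp_of_integral_rpow_ne_zero hp0 (fun x => norm_nonneg _) hg).const_mul |t|)
  simpa [norm_smul] using norm_add_le (f x) (t • g x)

end Lp

theorem WeakConv.norm_le {X : Type*} [NormedAddCommGroup X] [NormedSpace ℝ X] {u : ℕ → X}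
    {v : X} {R : ℝ} (h : WeakConv u v) (hu : ∀ n, ‖u n‖ ≤ R) : ‖v‖ ≤ R := by
  rcases eq_or_ne v 0 with rfl | hv
  · simpa using (norm_nonneg _).trans (hu 0)
  obtain ⟨ℓ, hℓ, hℓv⟩ := exists_dual_vector ℝ v (norm_ne_zero_iff.mpr hv)
  refine le_of_tendsto (by simpa [hℓv] using h ℓ) (Eventually.of_forall fun n => ?_)
  calc ℓ (u n) ≤ ‖ℓ‖ * ‖u n‖ := (le_abs_self _).trans (ℓ.le_opNorm (u n))
    _ ≤ R := by rw [hℓ, one_mul]; exact hu n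

section Energy

variable {X Ω B E : Type*} [NormedAddCommGroup X] [NormedSpace ℝ X] [MeasurableSpace Ω]
  [MeasurableSpace B] [NormedAddCommGroup E] [NormedSpace ℝ E] {μ : Measure Ω} {σ : Measure B}
  {p : ℝ} {D : X →ₗ[ℝ] Ω → E} {I : X →ₗ[ℝ] Ω → ℝ} {Tr : X →ₗ[ℝ] B → ℝ} {g : B → ℝ}

theorem integral_norm_rpow_map_smul (T : X →ₗ[ℝ] Ω → E) (c : ℝ) (z : X) :
    ∫ x, ‖T (c • z) x‖ ^ p ∂μ = |c| ^ p * ∫ x, ‖T z x‖ ^ p ∂μ := by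
  simp_rw [map_smul, Pi.smul_apply, norm_smul, Real.norm_eq_abs,
    Real.mul_rpow (abs_nonneg c) (norm_nonneg _)]
  exact integral_const_mul _ _

theorem integral_mul_abs_rpow_map_smul (T : X →ₗ[ℝ] B → ℝ) (g : B → ℝ) (c : ℝ) (z : X) :
    ∫ x, g x * |T (c • z) x| ^ p ∂σ = |c| ^ p * ∫ x, g x * |T z x| ^ p ∂σ := by
  simp_rw [map_smul, Pi.smul_apply, smul_eq_mul, abs_mul,
    Real.mul_rpow (abs_nonneg c) (abs_nonneg _), mul_left_comm (g _)]
  exact integral_const_mul _ _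

theorem integral_abs_rpow_add_smul_pos (hp : 1 ≤ p)
    (hnorm : ∀ z : X, ‖z‖ ^ p = (∫ x, ‖D z x‖ ^ p ∂μ) + ∫ x, |I z x| ^ p ∂μ)
    {y z : X} (hy : ‖y‖ = 1) (hz : ‖z‖ ≤ 1) (hDy : ∫ x, ‖D y x‖ ^ p ∂μ ≠ 0)
    (hDz : ∫ x, ‖D z x‖ ^ p ∂μ ≠ 0) (hDy_small : (∫ x, ‖D y x‖ ^ p ∂μ) ^ p⁻¹ < 1 / 2)
    {t : ℝ} (ht : |t| ≤ 1 / 4) :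
    0 < ∫ x, |I (y + t • z) x| ^ p ∂μ := by
  have hp0 : 0 < p := zero_lt_one.trans_le hp
  have hDnonneg : ∀ w : X, 0 ≤ ∫ x, ‖D w x‖ ^ p ∂μ := fun w =>
    integral_nonneg fun x => by positivity
  have hInonneg : ∀ w : X, 0 ≤ ∫ x, |I w x| ^ p ∂μ := fun w =>
    integral_nonneg fun x => by positivity
  have hnorm_ge : 3 / 4 ≤ ‖y + t • z‖ := by
    have : |t| * ‖z‖ ≤ 1 / 4 := by nlinarith [abs_nonneg t, norm_nonneg z]
    have := norm_sub_le_norm_add y (t • z)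
    rw [norm_smul, Real.norm_eq_abs, hy] at this
    linarith
  have hDz_le : (∫ x, ‖D z x‖ ^ p ∂μ) ^ p⁻¹ ≤ 1 := by
    rw [Real.rpow_inv_le_iff_of_pos (hDnonneg z) zero_le_one hp0, Real.one_rpow]
    linarith [hnorm z, hInonneg z, Real.rpow_le_one (norm_nonneg z) hz hp0.le]
  have hD_lt : (∫ x, ‖D (y + t • z) x‖ ^ p ∂μ) ^ p⁻¹ < ‖y + t • z‖ := by
    have hmink := integral_norm_add_smul_rpow_rpow_inv_le hp hDy hDz t
    simp only [map_add, map_smul, Pi.add_apply, Pi.smul_apply]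
    nlinarith [abs_nonneg t]
  rw [Real.rpow_inv_lt_iff_of_pos (hDnonneg _) (norm_nonneg _) hp0] at hD_lt
  linarith [hnorm (y + t • z)]

theorem integral_boundary_mul_measureReal_eq
    (hconst : ∀ z : X, (∫ x, ‖D z x‖ ^ p ∂μ) = 0 →
      ∃ c : ℝ, (∀ᵐ x ∂μ, I z x = c) ∧ ∀ᵐ x ∂σ, Tr z x = c)
    {z : X} (hz : ∫ x, ‖D z x‖ ^ p ∂μ = 0) :
    (∫ x, g x * |Tr z x| ^ p ∂σ) * μ.real univ = (∫ x, |I z x| ^ p ∂μ) * ∫ x, g x ∂σ := by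
  obtain ⟨c, hIc, hTc⟩ := hconst z hz
  rw [integral_congr_ae (hTc.mono fun x hx => by rw [hx]), integral_mul_const,
    integral_congr_ae (hIc.mono fun x hx => by rw [hx]), integral_const, smul_eq_mul]
  ring

theorem eq_zero_of_integral_grad_eq_zero (hgneg : ∫ x, g x ∂σ < 0)
    (hnorm : ∀ z : X, ‖z‖ ^ p = (∫ x, ‖D z x‖ ^ p ∂μ) + ∫ x, |I z x| ^ p ∂μ)
    (hconst : ∀ z : X, (∫ x, ‖D z x‖ ^ p ∂μ) = 0 →
      ∃ c : ℝ, (∀ᵐ x ∂μ, I z x = c) ∧ ∀ᵐ x ∂σ, Tr z x = c)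
    {z : X} (hz : ∫ x, ‖D z x‖ ^ p ∂μ = 0) (hG : 0 ≤ ∫ x, g x * |Tr z x| ^ p ∂σ) : z = 0 := by
  have hid := integral_boundary_mul_measureReal_eq (g := g) hconst hz
  have hI : ∫ x, |I z x| ^ p ∂μ ≤ 0 := by
    nlinarith [mul_nonneg hG (measureReal_nonneg (μ := μ) (s := univ))]
  have hz_pow : ‖z‖ ^ p ≤ 0 := by rw [hnorm z, hz]; linarith
  by_contra hne
  exact (Real.rpow_pos_of_pos (norm_pos_iff.mpr hne) p).not_ge hz_pow

theorem integral_boundary_mul_measureReal_eq_of_frequently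
    (hconst : ∀ z : X, (∫ x, ‖D z x‖ ^ p ∂μ) = 0 →
      ∃ c : ℝ, (∀ᵐ x ∂μ, I z x = c) ∧ ∀ᵐ x ∂σ, Tr z x = c)
    {u : ℕ → X} {v : X}
    (hGu : Tendsto (fun k => ∫ x, g x * |Tr (u k) x| ^ p ∂σ) atTop
      (𝓝 (∫ x, g x * |Tr v x| ^ p ∂σ)))
    (hIu : Tendsto (fun k => ∫ x, |I (u k) x| ^ p ∂μ) atTop (𝓝 1))
    (hfreq : ∃ᶠ k in atTop, ∫ x, ‖D (u k) x‖ ^ p ∂μ = 0) :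
    (∫ x, g x * |Tr v x| ^ p ∂σ) * μ.real univ = ∫ x, g x ∂σ := by
  obtain ⟨s, hs, hDs⟩ := extraction_of_frequently_atTop hfreq
  have hlim := ((hIu.comp hs.tendsto_atTop).mul_const (∫ x, g x ∂σ)).congr
    fun j => (integral_boundary_mul_measureReal_eq hconst (hDs j)).symm
  rw [one_mul] at hlim
  exact tendsto_nhds_unique ((hGu.comp hs.tendsto_atTop).mul_const _) hlim

theorem one_le_integral_abs_rpow_of_tendsto (hp : 1 < p)
    (hnorm : ∀ z : X, ‖z‖ ^ p = (∫ x, ‖D z x‖ ^ p ∂μ) + ∫ x, |I z x| ^ p ∂μ)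
    {u : ℕ → X} {v : X} (hu : ∀ k, ‖u k‖ = 1) (hv : ‖v‖ ≤ 1)
    (hDu : Tendsto (fun k => ∫ x, ‖D (u k) x‖ ^ p ∂μ) atTop (𝓝 0))
    (hDu_ne : ∀ᶠ k in atTop, ∫ x, ‖D (u k) x‖ ^ p ∂μ ≠ 0) (hDv : ∫ x, ‖D v x‖ ^ p ∂μ ≠ 0)
    (hIu : Tendsto (fun k => ∫ x, |I (u k) x| ^ p ∂μ) atTop (𝓝 1))
    (hIuv : Tendsto (fun k => ∫ x, |I (u k) x - I v x| ^ p ∂μ) atTop (𝓝 0)) :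
    1 ≤ ∫ x, |I v x| ^ p ∂μ := by
  have hp0 : 0 < p := one_pos.trans hp
  have hroot : ∀ {a : ℕ → ℝ} {b : ℝ}, Tendsto a atTop (𝓝 b) →
      Tendsto (fun k => a k ^ p⁻¹) atTop (𝓝 (b ^ p⁻¹)) := fun h =>
    h.rpow_const (Or.inr (inv_nonneg.mpr hp0.le))
  have hDu_small : ∀ᶠ k in atTop, (∫ x, ‖D (u k) x‖ ^ p ∂μ) ^ p⁻¹ < 1 / 2 :=
    (hroot hDu).eventually_lt_const (by rw [Real.zero_rpow (inv_ne_zero hp0.ne')]; norm_num)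
  have hmink : ∀ᶠ k in atTop, (∫ x, |I (u k) x| ^ p ∂μ) ^ p⁻¹ ≤
      (∫ x, |I v x| ^ p ∂μ) ^ p⁻¹ + (∫ x, |I (u k) x - I v x| ^ p ∂μ) ^ p⁻¹ := by
    filter_upwards [hDu_ne, hDu_small] with k hk hk_small
    have hpos : ∀ t : ℝ, |t| ≤ 1 / 4 → 0 < ∫ x, |I (u k) x + t * I v x| ^ p ∂μ := fun t ht => by
      simpa using integral_abs_rpow_add_smul_pos hp.le hnorm (hu k) hv hk hDv hk_small ht
    refine integral_abs_rpow_rpow_inv_le_add_sub (t := 1 / 4) hp.le (by norm_num) ?_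
      (hpos _ (by norm_num [abs_of_pos])).ne' ?_
    · simpa using (hpos 0 (by norm_num)).ne'
    · simpa [sub_eq_add_neg] using (hpos (-(1 / 4)) (by norm_num [abs_of_pos])).ne'
  have hle := le_of_tendsto_of_tendsto (hroot hIu) (tendsto_const_nhds.add (hroot hIuv)) hmink
  rw [Real.one_rpow, Real.zero_rpow (inv_ne_zero hp0.ne'), add_zero,
    Real.le_rpow_inv_iff_of_pos zero_le_one (integral_nonneg fun x => by positivity) hp0,
    Real.one_rpow] at hle
  exact hle

theorem not_tendsto_integral_grad_zero (hp : 1 < p) (hgneg : ∫ x, g x ∂σ < 0)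
    (hGweak : ∀ (u : ℕ → X) (v : X), WeakConv u v →
      Tendsto (fun n => ∫ x, g x * |Tr (u n) x| ^ p ∂σ) atTop
        (𝓝 (∫ x, g x * |Tr v x| ^ p ∂σ)))
    (hnorm : ∀ z : X, ‖z‖ ^ p = (∫ x, ‖D z x‖ ^ p ∂μ) + ∫ x, |I z x| ^ p ∂μ)
    (hreflex : ∀ u : ℕ → X, (∃ R : ℝ, ∀ n, ‖u n‖ ≤ R) →
      ∃ (v : X) (s : ℕ → ℕ), StrictMono s ∧ WeakConv (u ∘ s) v)
    (hcpt : ∀ (u : ℕ → X) (v : X), WeakConv u v →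
      Tendsto (fun n => ∫ x, |I (u n) x - I v x| ^ p ∂μ) atTop (𝓝 0))
    (hconst : ∀ z : X, (∫ x, ‖D z x‖ ^ p ∂μ) = 0 →
      ∃ c : ℝ, (∀ᵐ x ∂μ, I z x = c) ∧ ∀ᵐ x ∂σ, Tr z x = c)
    {w : ℕ → X} (hw : ∀ k, ‖w k‖ = 1) {r : ℕ → ℝ} (hr : Tendsto r atTop (𝓝 0))
    (hG : ∀ k, -r k ≤ ∫ x, g x * |Tr (w k) x| ^ p ∂σ) :
    ¬ Tendsto (fun k => ∫ x, ‖D (w k) x‖ ^ p ∂μ) atTop (𝓝 0) := by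
  intro hDw
  obtain ⟨v, s, hs, hwv⟩ := hreflex w ⟨1, fun k => (hw k).le⟩
  have hu : ∀ k, ‖(w ∘ s) k‖ = 1 := fun k => hw (s k)
  have hv_le : ‖v‖ ≤ 1 := hwv.norm_le fun k => (hu k).le
  have hDu := hDw.comp hs.tendsto_atTop
  have hIu : Tendsto (fun k => ∫ x, |I (w (s k)) x| ^ p ∂μ) atTop (𝓝 1) := by
    have h := (tendsto_const_nhds (x := (1 : ℝ))).sub hDu
    rw [sub_zero] at h
    refine h.congr fun k => ?_
    have hk := hnorm (w (s k))
    rw [hw, Real.one_rpow] at hk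
    simp only [Function.comp_apply]
    linarith
  have hGv : 0 ≤ ∫ x, g x * |Tr v x| ^ p ∂σ :=
    le_of_tendsto_of_tendsto (by simpa using (hr.comp hs.tendsto_atTop).neg) (hGweak _ v hwv)
      (Eventually.of_forall fun k => hG (s k))
  have hv : v ≠ 0 := by
    rintro rfl
    have h0 := hcpt _ 0 hwv
    simp only [map_zero, Pi.zero_apply, sub_zero] at h0
    exact one_ne_zero (tendsto_nhds_unique hIu h0)
  have hDv : ∫ x, ‖D v x‖ ^ p ∂μ ≠ 0 := fun h =>
    hv (eq_zero_of_integral_grad_eq_zero hgneg hnorm hconst h hGv)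
  by_cases hfreq : ∃ᶠ k in atTop, ∫ x, ‖D (w (s k)) x‖ ^ p ∂μ = 0
  · have hid :=
      integral_boundary_mul_measureReal_eq_of_frequently hconst (hGweak _ v hwv) hIu hfreq
    nlinarith [mul_nonneg hGv (measureReal_nonneg (μ := μ) (s := univ))]
  · have hIv := one_le_integral_abs_rpow_of_tendsto hp hnorm hu hv_le hDu
      (not_frequently.mp hfreq) hDv hIu (hcpt _ v hwv)
    have hv_pow := Real.rpow_le_one (norm_nonneg v) hv_le (one_pos.trans hp).le
    have hDv_nonneg : 0 ≤ ∫ x, ‖D v x‖ ^ p ∂μ := integral_nonneg fun x => by positivity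
    exact hDv (by linarith [hnorm v])

end Energy

theorem Lp_bounded_of_gradient_bounded_general
    {X Ω B : Type*} [NormedAddCommGroup X] [NormedSpace ℝ X]
    [MeasurableSpace Ω] [MeasurableSpace B]
    (μ : Measure Ω) (σ : Measure B)
    (N : ℕ) (p : ℝ) (hp : 1 < p)
    (D : X →ₗ[ℝ] Ω → EuclideanSpace ℝ (Fin N)) (I : X →ₗ[ℝ] Ω → ℝ) (Tr : X →ₗ[ℝ] B → ℝ)
    (g : B → ℝ) (hgneg : (∫ x, g x ∂σ) < 0)
    -- weak sequential continuity of `G`: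
    (hGweak : ∀ (u : ℕ → X) (v : X), WeakConv u v →
      Tendsto (fun n => ∫ x, g x * |Tr (u n) x| ^ p ∂σ) atTop
        (𝓝 (∫ x, g x * |Tr v x| ^ p ∂σ)))
    -- `W^{1,p}`-norm identity:
    (hnorm : ∀ φ : X, ‖φ‖ ^ p = (∫ x, ‖D φ x‖ ^ p ∂μ) + ∫ x, |I φ x| ^ p ∂μ)
    -- reflexivity:
    (hreflex : ∀ u : ℕ → X, (∃ R : ℝ, ∀ n, ‖u n‖ ≤ R) →
      ∃ (v : X) (s : ℕ → ℕ), StrictMono s ∧ WeakConv (u ∘ s) v)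
    -- compact embedding `W^{1,p}(Ω) ↪↪ L^p(Ω)`:
    (hcpt : ∀ (u : ℕ → X) (v : X), WeakConv u v →
      Tendsto (fun n => ∫ x, |I (u n) x - I v x| ^ p ∂μ) atTop (𝓝 0))
    -- gradient-free functions are constants on the connected domain:
    (hconst : ∀ φ : X, (∫ x, ‖D φ x‖ ^ p ∂μ) = 0 →
      ∃ c : ℝ, (∀ᵐ x ∂μ, I φ x = c) ∧ ∀ᵐ x ∂σ, Tr φ x = c)
    (φ : ℕ → X) (C lam : ℝ) (hlam : 0 < lam)
    (hbound : ∀ n, (∫ x, ‖D (φ n) x‖ ^ p ∂μ) -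
      lam * (∫ x, g x * |Tr (φ n) x| ^ p ∂σ) < C)
    (hgrad : ∃ M : ℝ, ∀ n, (∫ x, ‖D (φ n) x‖ ^ p ∂μ) ≤ M) :
    ∃ M' : ℝ, ∀ n, (∫ x, |I (φ n) x| ^ p ∂μ) ≤ M' := by
  by_contra! hunbdd
  obtain ⟨M, hM⟩ := hgrad
  choose n hn using fun k : ℕ => hunbdd k
  have hDnonneg : ∀ k, 0 ≤ ∫ x, ‖D (φ (n k)) x‖ ^ p ∂μ := fun k =>
    integral_nonneg fun x => by positivity
  have hnorm_gt : ∀ k : ℕ, (k : ℝ) < ‖φ (n k)‖ ^ p := fun k => by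
    linarith [hn k, hnorm (φ (n k)), hDnonneg k]
  have hne : ∀ k, φ (n k) ≠ 0 := fun k h => by
    simpa [h, Real.zero_rpow (one_pos.trans hp).ne'] using
      (Nat.cast_nonneg k).trans_lt (hnorm_gt k)
  have hnorm_top : Tendsto (fun k => ‖φ (n k)‖ ^ p) atTop atTop :=
    tendsto_atTop_mono (fun k => (hnorm_gt k).le) tendsto_natCast_atTop_atTop
  have hscale : ∀ k, |‖φ (n k)‖⁻¹| ^ p = (‖φ (n k)‖ ^ p)⁻¹ := fun k => by
    rw [abs_inv, abs_norm, Real.inv_rpow (norm_nonneg _)]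
  refine not_tendsto_integral_grad_zero hp hgneg hGweak hnorm hreflex hcpt hconst
    (w := fun k => ‖φ (n k)‖⁻¹ • φ (n k)) (r := fun k => C / lam / ‖φ (n k)‖ ^ p)
    (fun k => norm_smul_inv_norm (hne k)) (tendsto_const_nhds.div_atTop hnorm_top)
    (fun k => ?_) ?_
  · rw [integral_mul_abs_rpow_map_smul, hscale, div_eq_inv_mul, ← mul_neg]
    refine mul_le_mul_of_nonneg_left ?_ (by positivity)
    rw [neg_le, le_div_iff₀ hlam]
    linarith [hbound (n k), hDnonneg k]
  · refine squeeze_zero (fun k => integral_nonneg fun x => by positivity) (fun k => ?_)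
      ((tendsto_const_nhds (x := M)).div_atTop hnorm_top)
    rw [integral_norm_rpow_map_smul, hscale, div_eq_inv_mul]
    exact mul_le_mul_of_nonneg_left (hM _) (by positivity)

/-- If a sequence `(φ_n) ⊂ W^{1,p}(Ω)` satisfies
`∫_Ω|∇φ_n|^p - λ∫_{∂Ω} g|φ_n|^p < C` for some `C > 0` and `λ > 0`, with `∫_{∂Ω} g < 0`
and `G` weakly sequentially continuous, and `(‖∇φ_n‖_p)` is bounded, then `(‖φ_n‖_p)` is
bounded.  Here `X` models `W^{1,p}(Ω)` with gradient `D`, inclusion `I` and trace `Tr`. -/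
theorem Lp_bounded_of_gradient_bounded
    {X Ω B : Type*} [NormedAddCommGroup X] [NormedSpace ℝ X]
    [MeasurableSpace Ω] [MeasurableSpace B]
    (μ : Measure Ω) [IsFiniteMeasure μ] (σ : Measure B) [IsFiniteMeasure σ]
    (N : ℕ) (p : ℝ) (hp : 1 < p)
    (D : X →ₗ[ℝ] Ω → EuclideanSpace ℝ (Fin N)) (I : X →ₗ[ℝ] Ω → ℝ) (Tr : X →ₗ[ℝ] B → ℝ)
    (g : B → ℝ) (hg : Integrable g σ) (hgneg : (∫ x, g x ∂σ) < 0)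
    -- weak sequential continuity of `G`:
    (hGweak : ∀ (u : ℕ → X) (v : X), WeakConv u v →
      Tendsto (fun n => ∫ x, g x * |Tr (u n) x| ^ p ∂σ) atTop
        (𝓝 (∫ x, g x * |Tr v x| ^ p ∂σ)))
    -- `W^{1,p}`-norm identity:
    (hnorm : ∀ φ : X, ‖φ‖ ^ p = (∫ x, ‖D φ x‖ ^ p ∂μ) + ∫ x, |I φ x| ^ p ∂μ)
    -- reflexivity:
    (hreflex : ∀ u : ℕ → X, (∃ R : ℝ, ∀ n, ‖u n‖ ≤ R) →
      ∃ (v : X) (s : ℕ → ℕ), StrictMono s ∧ WeakConv (u ∘ s) v)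
    -- compact embedding `W^{1,p}(Ω) ↪↪ L^p(Ω)`:
    (hcpt : ∀ (u : ℕ → X) (v : X), WeakConv u v →
      Tendsto (fun n => ∫ x, |I (u n) x - I v x| ^ p ∂μ) atTop (𝓝 0))
    -- gradient-free functions are constants on the connected domain:
    (hconst : ∀ φ : X, (∫ x, ‖D φ x‖ ^ p ∂μ) = 0 →
      ∃ c : ℝ, (∀ᵐ x ∂μ, I φ x = c) ∧ ∀ᵐ x ∂σ, Tr φ x = c)
    (φ : ℕ → X) (C lam : ℝ) (hC : 0 < C) (hlam : 0 < lam)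
    (hbound : ∀ n, (∫ x, ‖D (φ n) x‖ ^ p ∂μ) -
      lam * (∫ x, g x * |Tr (φ n) x| ^ p ∂σ) < C)
    (hgrad : ∃ M : ℝ, ∀ n, (∫ x, ‖D (φ n) x‖ ^ p ∂μ) ≤ M) :
    ∃ M' : ℝ, ∀ n, (∫ x, |I (φ n) x| ^ p ∂μ) ≤ M' :=
  Lp_bounded_of_gradient_bounded_general μ σ N p hp D I Tr g hgneg hGweak hnorm hreflex hcpt hconst
    φ C lam hlam hbound hgrad
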